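/- Let A ⊆ X be nonempty and x ∉ A, and let C^+_A(x) be the minimal cycle strictly containing the initial cycle C_A(x). Then a path ω from x to A (not touching A before its endpoint) is optimal (i.e., its elevation equals Φ(x,A)) if and only if all its states lie in C^+_A(x). -/

import Mathlib

/- Abstract energy landscape: finite state space `X`, energy `H`, connectivity `q`. -/

variable {X : Type*}

/-- A path from `x` to `y`: a nonempty finite sequence of states with consecutive
states connected by `q`. -/
def IsPath (q : X → X → Prop) (ω : List X) (x y : X) : Prop :=
  ω ≠ [] ∧ ω.Chain' q ∧ ω.head? = some x ∧ ω.getLast? = some y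

/-- The elevation (height) of a path: the maximal energy along it. -/
noncomputable def elev (H : X → ℝ) (ω : List X) : ℝ :=
  sSup (H '' {z | z ∈ ω})

/-- The communication energy between two states: the minimal elevation over paths. -/
noncomputable def commE (H : X → ℝ) (q : X → X → Prop) (x y : X) : ℝ :=
  sInf {e | ∃ ω, IsPath q ω x y ∧ elev H ω = e}

/-- The communication energy between two sets of states. -/
noncomputable def commSet (H : X → ℝ) (q : X → X → Prop) (A B : Set X) : ℝ :=
  sInf {e | ∃ x ∈ A, ∃ y ∈ B, commE H q x y = e}

/-- A set of states is connected if any two of its states are joined by a path inside it. -/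
def SetConn (q : X → X → Prop) (C : Set X) : Prop :=
  ∀ x ∈ C, ∀ y ∈ C, ∃ ω, IsPath q ω x y ∧ ∀ z ∈ ω, z ∈ C

/-- The external boundary of a set of states. -/
def extBdry (q : X → X → Prop) (C : Set X) : Set X :=
  {y | y ∉ C ∧ ∃ x ∈ C, q x y}

/-- A non-trivial cycle: a connected set whose maximal internal energy is strictly
below the minimal energy on its external boundary. -/
def IsNontrivialCycle (H : X → ℝ) (q : X → X → Prop) (C : Set X) : Prop :=
  C.Nonempty ∧ SetConn q C ∧ sSup (H '' C) < sInf (H '' extBdry q C)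

/-- A cycle: a singleton, or a non-trivial cycle. -/
def IsCycle (H : X → ℝ) (q : X → X → Prop) (C : Set X) : Prop :=
  (∃ x, C = {x}) ∨ IsNontrivialCycle H q C

/-- The communication energy between a state and a set of states. -/
noncomputable def commA (H : X → ℝ) (q : X → X → Prop) (x : X) (A : Set X) : ℝ :=
  sInf {e | ∃ y ∈ A, commE H q x y = e}

/-- The initial cycle `C_A(x) = {x} ∪ {z : Φ(x,z) < Φ(x,A)}`. -/
def initCycle (H : X → ℝ) (q : X → X → Prop) (A : Set X) (x : X) : Set X :=
  {x} ∪ {z | commE H q x z < commA H q x A}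

/-- `ω ∈ Ω_{x,A}`: a path from `x` ending in `A` which does not visit `A` before
its endpoint. -/
def InOmega (q : X → X → Prop) (A : Set X) (x : X) (ω : List X) : Prop :=
  ω ≠ [] ∧ ω.Chain' q ∧ ω.head? = some x ∧
    (∃ y ∈ A, ω.getLast? = some y) ∧ ∀ z ∈ ω.dropLast, z ∉ A

/-! Write `Γ = Φ(x,A)` and `D = {z | Φ(x,z) ≤ Γ}`. Optimal paths from `x` to points of `D`
stay in `D`, and a neighbour `w ∉ D` of `D` must have `H w > Γ`, so `D` is a cycle (or all of
`X`) strictly containing `C_A(x)`; by minimality `C^+_A(x) ⊆ D`, hence `H ≤ Γ` on `C^+_A(x)`.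
Conversely `C^+_A(x)` is connected and not contained in `C_A(x)`, so it has a state of energy
`≥ Γ`, and being a cycle its external boundary lies strictly above `Γ`. A path of `Ω_{x,A}`
inside `C^+_A(x)` therefore has elevation exactly `Γ`, and one leaving it exceeds `Γ`. -/

section Elevation

variable (H : X → ℝ) {ω : List X}

lemma le_elev_of_mem {z : X} (hz : z ∈ ω) : H z ≤ elev H ω :=
  le_csSup (ω.finite_toSet.image H).bddAbove ⟨z, hz, rfl⟩

variable {H}

lemma elev_le_of_forall_le (hne : ω ≠ []) {b : ℝ} (hb : ∀ z ∈ ω, H z ≤ b) :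
    elev H ω ≤ b := by
  obtain ⟨z, hz⟩ := List.exists_mem_of_ne_nil ω hne
  refine csSup_le ⟨H z, z, hz, rfl⟩ ?_
  rintro _ ⟨w, hw, rfl⟩
  exact hb w hw

lemma exists_mem_elev_eq (hne : ω ≠ []) : ∃ z ∈ ω, elev H ω = H z := by
  obtain ⟨z, hz⟩ := List.exists_mem_of_ne_nil ω hne
  obtain ⟨w, hw, he⟩ := (Set.Nonempty.image H ⟨z, hz⟩).csSup_mem (ω.finite_toSet.image H)
  exact ⟨w, hw, he.symm⟩

end Elevation

namespace IsPath

variable {q : X → X → Prop} {ω : List X} {x y : X}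

lemma head_mem (h : IsPath q ω x y) : x ∈ ω :=
  List.mem_of_mem_head? h.2.2.1

lemma getLast_mem (h : IsPath q ω x y) : y ∈ ω :=
  List.mem_of_mem_getLast? h.2.2.2

lemma singleton (x : X) : IsPath q [x] x x :=
  ⟨List.cons_ne_nil x [], List.isChain_singleton x, rfl, rfl⟩

lemma pair (h : q x y) : IsPath q [x, y] x y :=
  ⟨List.cons_ne_nil x _, List.isChain_pair.mpr h, rfl, rfl⟩

lemma reverse (hsymm : ∀ a b, q a b → q b a) (h : IsPath q ω x y) :
    IsPath q ω.reverse y x := by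
  obtain ⟨hne, hch, hh, hl⟩ := h
  refine ⟨List.reverse_ne_nil_iff.mpr hne, ?_, ?_, ?_⟩
  · exact List.isChain_reverse.mpr (hch.imp hsymm)
  · rwa [List.head?_reverse]
  · rwa [List.getLast?_reverse]

lemma exists_trans {ω₂ : List X} {z : X} (h₁ : IsPath q ω x y) (h₂ : IsPath q ω₂ y z) :
    ∃ ω', IsPath q ω' x z ∧ ∀ w ∈ ω', w ∈ ω ∨ w ∈ ω₂ := by
  obtain ⟨hne₁, hch₁, hh₁, hl₁⟩ := h₁
  obtain ⟨hne₂, hch₂, hh₂, hl₂⟩ := h₂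
  obtain ⟨t, rfl⟩ : ∃ t, ω₂ = y :: t := by
    cases ω₂ with
    | nil => exact absurd rfl hne₂
    | cons a t => exact ⟨t, by rw [Option.some_inj.mp hh₂]⟩
  refine ⟨ω ++ t, ⟨by simp [hne₁], ?_, ?_, ?_⟩, ?_⟩
  · refine List.isChain_append.mpr ⟨hch₁, (List.isChain_cons.mp hch₂).2, ?_⟩
    intro a ha b hb
    obtain rfl : y = a := by simpa [hl₁] using ha
    exact (List.isChain_cons.mp hch₂).1 b hb
  · rwa [List.head?_append_of_ne_nil _ hne₁]
  · cases t with
    | nil => simpa [show y = z by simpa using hl₂] using hl₁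
    | cons b t' => rwa [List.getLast?_append_of_ne_nil _ (List.cons_ne_nil b t'),
        ← List.getLast?_cons_cons]
  · intro w hw
    rcases List.mem_append.mp hw with h | h
    · exact Or.inl h
    · exact Or.inr (List.mem_cons_of_mem _ h)

lemma exists_prefix (h : IsPath q ω x y) {z : X} (hz : z ∈ ω) :
    ∃ ω', IsPath q ω' x z ∧ ∀ w ∈ ω', w ∈ ω := by
  obtain ⟨-, hch, hh, -⟩ := h
  obtain ⟨l₁, l₂, rfl⟩ := List.append_of_mem hz
  refine ⟨l₁ ++ [z], ⟨by simp, hch.prefix ⟨l₂, by simp⟩, ?_, by simp⟩, ?_⟩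
  · cases l₁ <;> simpa using hh
  · intro w hw
    simp only [List.mem_append, List.mem_cons] at hw ⊢
    tauto

lemma exists_mem_extBdry (h : IsPath q ω x y) {S : Set X} (hx : x ∈ S) {z : X} (hz : z ∈ ω)
    (hzS : z ∉ S) : ∃ v ∈ ω, v ∈ extBdry q S := by
  obtain ⟨-, hch, hh, -⟩ := h
  induction ω generalizing x with
  | nil => simp at hz
  | cons a t ih =>
    obtain rfl : a = x := by simpa using hh
    cases t with
    | nil => exact absurd (by simpa using hz) (fun h : z = a => hzS (h ▸ hx))
    | cons b t' =>
      by_cases hb : b ∈ S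
      · have hzt : z ∈ b :: t' :=
          (List.mem_cons.mp hz).resolve_left fun h => hzS (h ▸ hx)
        obtain ⟨v, hv, hvS⟩ := ih hb hzt hch.tail rfl
        exact ⟨v, List.mem_cons_of_mem a hv, hvS⟩
      · exact ⟨b, by simp, hb, a, hx, (List.isChain_cons_cons.mp hch).1⟩

end IsPath

lemma InOmega.exists_isPath {q : X → X → Prop} {A : Set X} {x : X} {ω : List X}
    (h : InOmega q A x ω) : ∃ y ∈ A, IsPath q ω x y := by
  obtain ⟨hne, hch, hh, ⟨y, hy, hl⟩, -⟩ := h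
  exact ⟨y, hy, hne, hch, hh, hl⟩

section Communication

variable [Finite X] {H : X → ℝ} {q : X → X → Prop}

lemma finite_elev_isPath (x y : X) : {e | ∃ ω, IsPath q ω x y ∧ elev H ω = e}.Finite := by
  refine (Set.finite_range fun S : Set X => sSup (H '' S)).subset ?_
  rintro e ⟨ω, -, rfl⟩
  exact ⟨{z | z ∈ ω}, rfl⟩

lemma commE_le_elev {ω : List X} {x y : X} (h : IsPath q ω x y) : commE H q x y ≤ elev H ω :=
  csInf_le (finite_elev_isPath x y).bddBelow ⟨ω, h, rfl⟩

lemma exists_isPath_elev_eq_commE (hirr : ∀ a b : X, ∃ ω, IsPath q ω a b) (x y : X) :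
    ∃ ω, IsPath q ω x y ∧ elev H ω = commE H q x y := by
  obtain ⟨ω, hω⟩ := hirr x y
  exact Set.Nonempty.csInf_mem (s := {e | ∃ ω, IsPath q ω x y ∧ elev H ω = e})
    ⟨elev H ω, ω, hω, rfl⟩ (finite_elev_isPath x y)

variable (H) in
lemma le_commE_left (hirr : ∀ a b : X, ∃ ω, IsPath q ω a b) (x y : X) :
    H x ≤ commE H q x y := by
  obtain ⟨ω, hω, he⟩ := exists_isPath_elev_eq_commE hirr x y
  exact he ▸ le_elev_of_mem H hω.head_mem

variable (H) in
lemma le_commE_right (hirr : ∀ a b : X, ∃ ω, IsPath q ω a b) (x y : X) :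
    H y ≤ commE H q x y := by
  obtain ⟨ω, hω, he⟩ := exists_isPath_elev_eq_commE hirr x y
  exact he ▸ le_elev_of_mem H hω.getLast_mem

lemma commE_self_le (x : X) : commE H q x x ≤ H x :=
  (commE_le_elev (IsPath.singleton x)).trans
    (elev_le_of_forall_le (List.cons_ne_nil x []) (by simp))

lemma commE_le_of_mem_of_elev_eq {ω : List X} {x y z : X} (hω : IsPath q ω x y)
    (he : elev H ω = commE H q x y) (hz : z ∈ ω) : commE H q x z ≤ commE H q x y := by
  obtain ⟨ω', hω', hsub⟩ := hω.exists_prefix hz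
  calc commE H q x z ≤ elev H ω' := commE_le_elev hω'
    _ ≤ elev H ω := elev_le_of_forall_le hω'.1 fun w hw => le_elev_of_mem H (hsub w hw)
    _ = commE H q x y := he

lemma commE_le_max_of_adj (hirr : ∀ a b : X, ∃ ω, IsPath q ω a b) {x u w : X} (huw : q u w) :
    commE H q x w ≤ max (commE H q x u) (H w) := by
  obtain ⟨ω, hω, he⟩ := exists_isPath_elev_eq_commE hirr x u
  obtain ⟨ω', hω', hmem⟩ := hω.exists_trans (IsPath.pair huw)
  refine (commE_le_elev hω').trans (elev_le_of_forall_le hω'.1 fun v hv => ?_)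
  rcases hmem v hv with hv | hv
  · exact le_max_of_le_left (he ▸ le_elev_of_mem H hv)
  · obtain rfl | rfl : v = u ∨ v = w := by simpa using hv
    · exact le_max_of_le_left (he ▸ le_elev_of_mem H hω.getLast_mem)
    · exact le_max_right _ _

variable (H q) in
lemma commA_le_commE {A : Set X} {y : X} (hy : y ∈ A) (x : X) : commA H q x A ≤ commE H q x y :=
  csInf_le (A.toFinite.image (commE H q x)).bddBelow ⟨y, hy, rfl⟩

variable (H q) in
lemma exists_commE_eq_commA {A : Set X} (hA : A.Nonempty) (x : X) :
    ∃ y ∈ A, commE H q x y = commA H q x A :=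
  (hA.image (commE H q x)).csInf_mem (A.toFinite.image (commE H q x))

lemma commA_le_elev {A : Set X} {x : X} {ω : List X} (hω : InOmega q A x ω) :
    commA H q x A ≤ elev H ω := by
  obtain ⟨y, hy, hpath⟩ := hω.exists_isPath
  exact (commA_le_commE H q hy x).trans (commE_le_elev hpath)

end Communication

section Cycles

variable {H : X → ℝ} {q : X → X → Prop}

lemma IsCycle.isNontrivialCycle_of_ssubset {C S : Set X} (hC : IsCycle H q C) (hS : S.Nonempty)
    (hSC : S ⊂ C) : IsNontrivialCycle H q C := by
  rcases hC with ⟨a, rfl⟩ | hC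
  · exact absurd (Set.ssubset_singleton_iff.mp hSC) hS.ne_empty
  · exact hC

lemma IsNontrivialCycle.lt_of_mem_extBdry [Finite X] {C : Set X} (hC : IsNontrivialCycle H q C)
    {z w : X} (hz : z ∈ C) (hw : w ∈ extBdry q C) : H z < H w :=
  calc H z ≤ sSup (H '' C) := le_csSup (C.toFinite.image H).bddAbove ⟨z, hz, rfl⟩
    _ < sInf (H '' extBdry q C) := hC.2.2
    _ ≤ H w := csInf_le ((extBdry q C).toFinite.image H).bddBelow ⟨w, hw, rfl⟩

lemma SetConn.subset_initCycle [Finite X] {C A : Set X} {x : X} (hC : SetConn q C) (hx : x ∈ C)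
    (hlt : ∀ z ∈ C, H z < commA H q x A) : C ⊆ initCycle H q A x := by
  intro z hz
  obtain ⟨ω, hω, hmem⟩ := hC x hx z hz
  obtain ⟨v, hv, he⟩ := exists_mem_elev_eq (H := H) hω.1
  exact Or.inr ((commE_le_elev hω).trans_lt (he ▸ hlt v (hmem v hv)))

end Cycles

def commSublevel (H : X → ℝ) (q : X → X → Prop) (x : X) (c : ℝ) : Set X :=
  {z | commE H q x z ≤ c}

section Sublevel

variable [Finite X] {H : X → ℝ} {q : X → X → Prop} {x : X} {c : ℝ}

lemma setConn_commSublevel (hsymm : ∀ a b, q a b → q b a)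
    (hirr : ∀ a b : X, ∃ ω, IsPath q ω a b) : SetConn q (commSublevel H q x c) := by
  have hstay : ∀ z ∈ commSublevel H q x c,
      ∃ ω, IsPath q ω x z ∧ ∀ w ∈ ω, w ∈ commSublevel H q x c := by
    intro z hz
    obtain ⟨ω, hω, he⟩ := exists_isPath_elev_eq_commE hirr x z
    exact ⟨ω, hω, fun w hw => (commE_le_of_mem_of_elev_eq hω he hw).trans hz⟩
  intro u hu v hv
  obtain ⟨ωu, hωu, hu'⟩ := hstay u hu
  obtain ⟨ωv, hωv, hv'⟩ := hstay v hv
  obtain ⟨ω, hω, hmem⟩ := (hωu.reverse hsymm).exists_trans hωv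
  exact ⟨ω, hω, fun z hz => (hmem z hz).elim (fun h => hu' z (List.mem_reverse.mp h)) (hv' z)⟩

lemma lt_of_mem_extBdry_commSublevel (hirr : ∀ a b : X, ∃ ω, IsPath q ω a b) {w : X}
    (hw : w ∈ extBdry q (commSublevel H q x c)) : c < H w := by
  obtain ⟨hwD, u, hu, huw⟩ := hw
  by_contra! hle
  exact hwD ((commE_le_max_of_adj hirr huw).trans (max_le hu hle))

lemma isNontrivialCycle_commSublevel (hsymm : ∀ a b, q a b → q b a)
    (hirr : ∀ a b : X, ∃ ω, IsPath q ω a b)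
    (hbd : (extBdry q (commSublevel H q x c)).Nonempty) :
    IsNontrivialCycle H q (commSublevel H q x c) := by
  have ⟨_, _, u, hu, _⟩ := hbd
  refine ⟨⟨u, hu⟩, setConn_commSublevel hsymm hirr, ?_⟩
  calc sSup (H '' commSublevel H q x c) ≤ c := by
        refine csSup_le ⟨H u, u, hu, rfl⟩ ?_
        rintro _ ⟨z, hz, rfl⟩
        exact (le_commE_right H hirr x z).trans hz
    _ < sInf (H '' extBdry q (commSublevel H q x c)) := by
        obtain ⟨w, hw, he⟩ := (hbd.image H).csInf_mem ((extBdry q _).toFinite.image H)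
        exact he ▸ lt_of_mem_extBdry_commSublevel hirr hw

lemma initCycle_ssubset_commSublevel (hirr : ∀ a b : X, ∃ ω, IsPath q ω a b) {A : Set X}
    (hA : A.Nonempty) (hx : x ∉ A) :
    initCycle H q A x ⊂ commSublevel H q x (commA H q x A) := by
  obtain ⟨y, hyA, hy⟩ := exists_commE_eq_commA H q hA x
  refine ⟨?_, fun hsub => ?_⟩
  · rintro z (rfl | hz)
    · exact (commE_self_le z).trans (hy ▸ le_commE_left H hirr z y)
    · exact (show commE H q x z < commA H q x A from hz).le
  · rcases hsub (le_of_eq hy) with rfl | hlt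
    · exact hx hyA
    · exact (hy ▸ hlt : commA H q x A < commA H q x A).false

lemma subset_commSublevel_of_minimal (hsymm : ∀ a b, q a b → q b a)
    (hirr : ∀ a b : X, ∃ ω, IsPath q ω a b) {A : Set X} (hA : A.Nonempty) (hx : x ∉ A)
    {Cp : Set X} (hmin : ∀ C', IsCycle H q C' → initCycle H q A x ⊂ C' → Cp ⊆ C') :
    Cp ⊆ commSublevel H q x (commA H q x A) := by
  have hCD := initCycle_ssubset_commSublevel (H := H) hirr hA hx
  rcases (extBdry q (commSublevel H q x (commA H q x A))).eq_empty_or_nonempty with hbd | hbd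
  · -- no cycle here: the sublevel set is all of `X`, whose boundary infimum is `sInf ∅ = 0`
    intro z _
    by_contra hz
    obtain ⟨ω, hω⟩ := hirr x z
    obtain ⟨v, -, hv⟩ := hω.exists_mem_extBdry (hCD.1 (Or.inl rfl)) hω.getLast_mem hz
    exact (hbd ▸ hv : v ∈ (∅ : Set X))
  · exact hmin _ (Or.inr (isNontrivialCycle_commSublevel hsymm hirr hbd)) hCD

end Sublevel

/-- optimal path characterization. Given the minimal cycle `Cp`
strictly containing the initial cycle `C_A(x)`, a path `ω ∈ Ω_{x,A}` is optimal
(its elevation equals `Φ(x,A)`) iff all its states lie in `Cp`. -/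
theorem optimal_path_characterization [Fintype X] (H : X → ℝ) (q : X → X → Prop)
    (hsymm : ∀ x y, q x y → q y x)
    (hirr : ∀ x y : X, ∃ ω, IsPath q ω x y)
    (A : Set X) (hA : A.Nonempty) (x : X) (hx : x ∉ A)
    (Cp : Set X) (hcyc : IsCycle H q Cp)
    (hsub : initCycle H q A x ⊂ Cp)
    (hmin : ∀ C', IsCycle H q C' → initCycle H q A x ⊂ C' → Cp ⊆ C')
    (ω : List X) :
    (InOmega q A x ω ∧ elev H ω = commA H q x A) ↔
      (InOmega q A x ω ∧ ∀ z ∈ ω, z ∈ Cp) := by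
  have hxCp : x ∈ Cp := hsub.1 (Or.inl rfl)
  have hCp : IsNontrivialCycle H q Cp := hcyc.isNontrivialCycle_of_ssubset ⟨x, Or.inl rfl⟩ hsub
  have hle : ∀ z ∈ Cp, H z ≤ commA H q x A := fun z hz =>
    (le_commE_right H hirr x z).trans (subset_commSublevel_of_minimal hsymm hirr hA hx hmin hz)
  obtain ⟨z₀, hz₀, hΓz₀⟩ : ∃ z₀ ∈ Cp, commA H q x A ≤ H z₀ := by
    by_contra! h
    exact hsub.2 (hCp.2.1.subset_initCycle hxCp h)
  refine and_congr_right fun hω => ⟨fun helev => ?_, fun hall => ?_⟩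
  · by_contra! ⟨z, hz, hzCp⟩
    obtain ⟨y, -, hpath⟩ := hω.exists_isPath
    obtain ⟨v, hv, hvCp⟩ := hpath.exists_mem_extBdry hxCp hz hzCp
    linarith [le_elev_of_mem H hv, hCp.lt_of_mem_extBdry hz₀ hvCp]
  · exact le_antisymm (elev_le_of_forall_le hω.1 fun z hz => hle z (hall z hz))
      (commA_le_elev hω)
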